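/- Then m₁ + m₂ = −v and m₃ + m₄ = −w. (In other words, for each Voronoi relevant vector q of 𝖯 the line ℝq is the perpendicular bisector of the facet of V defined by q, and q equals half the sum of the two vertices of that facet.) -/
import Mathlib


/-!
STATEMENT 14: For the hexagonal Voronoi cell of `𝖯 = ℤu + ℤv` (strictly obtuse superbasis
`u, v, w = −u−v`), with vertices `m₁, m₂, m₃, m₄` determined by
`[m₁,w] = ½[w,w]`, `[m₁,v] = −½[v,v]`; `[m₂,u] = ½[u,u]`, `[m₂,v] = −½[v,v]`;
`[m₃,u] = ½[u,u]`, `[m₃,w] = −½[w,w]`; `[m₄,v] = ½[v,v]`, `[m₄,w] = −½[w,w]`,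
one has `m₁ + m₂ = −v` and `m₃ + m₄ = −w`.
-/

noncomputable section

/-- The standard inner product on `ℝ × ℝ`. -/
def ip (x y : ℝ × ℝ) : ℝ := x.1 * y.1 + x.2 * y.2

private lemma solve2 (a b c d X Y : ℝ) (hdet : a * d - b * c ≠ 0)
    (h1 : X * a + Y * b = 0) (h2 : X * c + Y * d = 0) : X = 0 ∧ Y = 0 := by
  constructor
  · have h : X * (a * d - b * c) = 0 := by linear_combination d * h1 - b * h2
    rcases mul_eq_zero.mp h with h | h
    · exact h
    · exact absurd h hdet
  · have h : Y * (a * d - b * c) = 0 := by linear_combination a * h2 - c * h1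
    rcases mul_eq_zero.mp h with h | h
    · exact h
    · exact absurd h hdet

theorem voronoi_facet_vertices_sum
    (u v w : ℝ × ℝ) (hw : w = -u - v)
    (huv : ip u v < 0) (huw : ip u w < 0) (hvw : ip v w < 0)
    (m₁ m₂ m₃ m₄ : ℝ × ℝ)
    (hm₁ : ip m₁ w = ip w w / 2 ∧ ip m₁ v = -(ip v v / 2))
    (hm₂ : ip m₂ u = ip u u / 2 ∧ ip m₂ v = -(ip v v / 2))
    (hm₃ : ip m₃ u = ip u u / 2 ∧ ip m₃ w = -(ip w w / 2))
    (hm₄ : ip m₄ v = ip v v / 2 ∧ ip m₄ w = -(ip w w / 2)) :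
    m₁ + m₂ = -v ∧ m₃ + m₄ = -w := by
  obtain ⟨h1w, h1v⟩ := hm₁
  obtain ⟨h2u, h2v⟩ := hm₂
  obtain ⟨h3u, h3w⟩ := hm₃
  obtain ⟨h4v, h4w⟩ := hm₄
  subst hw
  obtain ⟨a, b⟩ := u
  obtain ⟨c, d⟩ := v
  obtain ⟨p₁, q₁⟩ := m₁
  obtain ⟨p₂, q₂⟩ := m₂
  obtain ⟨p₃, q₃⟩ := m₃
  obtain ⟨p₄, q₄⟩ := m₄
  simp only [ip, Prod.neg_mk, Prod.mk_sub_mk, Prod.mk_add_mk, Prod.mk.injEq] at *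
  have hdet : a * d - b * c ≠ 0 := by
    intro h
    nlinarith [sq_nonneg (a*d - b*c), sq_nonneg a, sq_nonneg b, sq_nonneg c, sq_nonneg d]
  constructor
  · have e1 : (p₁ + p₂ + c) * a + (q₁ + q₂ + d) * b = 0 := by
      linear_combination -h1w - h1v + h2u
    have e2 : (p₁ + p₂ + c) * c + (q₁ + q₂ + d) * d = 0 := by
      linear_combination h1v + h2v
    obtain ⟨hX, hY⟩ := solve2 a b c d _ _ hdet e1 e2
    constructor <;> linarith
  · have e1 : (p₃ + p₄ - a - c) * a + (q₃ + q₄ - b - d) * b = 0 := by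
      linear_combination h3u - h4v - h4w
    have e2 : (p₃ + p₄ - a - c) * c + (q₃ + q₄ - b - d) * d = 0 := by
      linear_combination -h3u - h3w + h4v
    obtain ⟨hX, hY⟩ := solve2 a b c d _ _ hdet e1 e2
    constructor <;> linarith

end
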